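/- Assume c(δ) = 0, and set Φ_c⁺ = Φ⁺ ∩ R_c. Call α ∈ Φ_c⁺ minimal if it cannot be written as a sum of two elements of Φ_c⁺, and maximal if α + γ ∉ Φ_c⁺ for every γ ∈ Φ_c⁺. Then Σ_c = {minimal elements of Φ_c⁺} ∪ {δ} ∪ {δ − α : α a maximal element of Φ_c⁺}. -/

import Mathlib

open Finset

namespace AffineRoots

/-- The vertex set `I = {0,1,…,r}` of the graph. -/
abbrev I (r : ℕ) := Fin (r + 1)

/-- The root lattice `Q = ℤ^I`. -/
abbrev Q (r : ℕ) := I r → ℤ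

variable (r : ℕ)

/-- The standard basis vector (simple root) `e_i` of `Q`. -/
def e (i : I r) : Q r := Pi.single i 1

/-- The Cartan pairing matrix `(e_i, e_j) = 2·[i=j] − a_{ij}` attached to a graph with
`a i j` edges between `i` and `j`. -/
def cartan (a : I r → I r → ℕ) (i j : I r) : ℤ :=
  (if i = j then 2 else 0) - (a i j : ℤ)

/-- The symmetric bilinear form on `Q` determined by the Cartan pairing. -/
def B (a : I r → I r → ℕ) (α β : Q r) : ℤ :=
  ∑ i, ∑ j, α i * cartan r a i j * β j

/-- The reflection `s_i(α) = α − (α,e_i)·e_i`. -/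
def refl (a : I r → I r → ℕ) (i : I r) (α : Q r) : Q r :=
  α - B r a α (e r i) • e r i

/-- The Weyl group `W`: the group of bijections of `Q` generated by the reflections. -/
def W (a : I r → I r → ℕ) : Subgroup (Equiv.Perm (Q r)) :=
  Subgroup.closure {σ | ∃ i : I r, ∀ α, σ α = refl r a i α}

/-- The support of `α` is connected in the graph. -/
def SuppConnected (a : I r → I r → ℕ) (α : Q r) : Prop :=
  ∀ i j : I r, α i ≠ 0 → α j ≠ 0 →
    Relation.ReflTransGen (fun x y => α x ≠ 0 ∧ α y ≠ 0 ∧ 0 < a x y) i j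

/-- The fundamental region `F`: nonzero `α ∈ ℕ^I` with connected support and
`(α,e_i) ≤ 0` for all `i`. -/
def Fund (a : I r → I r → ℕ) : Set (Q r) :=
  {α | α ≠ 0 ∧ (∀ i, 0 ≤ α i) ∧ SuppConnected r a α ∧ ∀ i, B r a α (e r i) ≤ 0}

/-- The real roots: the `W`-orbits of the basis vectors. -/
def RealRoots (a : I r → I r → ℕ) : Set (Q r) :=
  {α | ∃ σ ∈ W r a, ∃ i, α = σ (e r i)}

/-- The imaginary roots: `W·F` and its negative. -/
def ImRoots (a : I r → I r → ℕ) : Set (Q r) :=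
  {α | ∃ σ ∈ W r a, ∃ β ∈ Fund r a, α = σ β ∨ α = -(σ β)}

/-- The root system `R`, consisting of all real and imaginary roots. -/
def Roots (a : I r → I r → ℕ) : Set (Q r) := RealRoots r a ∪ ImRoots r a

/-- The positive roots `R⁺ = R ∩ ℕ^I`. -/
def PosRoots (a : I r → I r → ℕ) : Set (Q r) :=
  {α ∈ Roots r a | ∀ i, 0 ≤ α i}

/-- `R_c = {α ∈ R : c(α) = 0}`. -/
def Rc (a : I r → I r → ℕ) (c : Q r →ₗ[ℤ] ℂ) : Set (Q r) :=
  {α ∈ Roots r a | c α = 0}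

/-- `R_c⁺ = R_c ∩ R⁺`. -/
def RcPos (a : I r → I r → ℕ) (c : Q r →ₗ[ℤ] ℂ) : Set (Q r) :=
  Rc r a c ∩ PosRoots r a

/-- `Δ(c)`: the minimal elements of `R_c⁺`, i.e. those which cannot be written as a sum
of two elements of `R_c⁺`. -/
def Dc (a : I r → I r → ℕ) (c : Q r →ₗ[ℤ] ℂ) : Set (Q r) :=
  {α ∈ RcPos r a c | ¬ ∃ β ∈ RcPos r a c, ∃ γ ∈ RcPos r a c, α = β + γ}

/-- The hypotheses characterizing a simply laced affine Dynkin graph, together with the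
distinguished imaginary root `δ`: the graph (with `a i j` edges between `i` and `j`) is
symmetric, loopless and connected; the Cartan form is positive semidefinite; and the
radical of the form is `ℤδ`, where `δ` has positive coordinates and `δ_0 = 1`. -/
structure AffineData (a : I r → I r → ℕ) (δ : Q r) : Prop where
  symm : ∀ i j, a i j = a j i
  noloops : ∀ i, a i i = 0
  connected : ∀ i j : I r, Relation.ReflTransGen (fun x y => 0 < a x y) i j
  posSemidef : ∀ α : Q r, 0 ≤ B r a α α
  delta_pos : ∀ i, 0 < δ i
  delta_zero : δ 0 = 1
  radical : ∀ α : Q r, (∀ β, B r a α β = 0) ↔ ∃ n : ℤ, α = n • δ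

end AffineRoots

namespace AffineRoots

/-- `p(α) = 1 − (1/2)(α,α)`, valued in `ℚ`. -/
def p (r : ℕ) (a : I r → I r → ℕ) (α : Q r) : ℚ :=
  1 - (B r a α α : ℚ) / 2

/-- `Σ_c`: the set of `α ∈ R_c⁺` such that `p(α) > p(β⁽¹⁾) + ⋯ + p(β⁽ᵏ⁾)` for every
decomposition `α = β⁽¹⁾ + ⋯ + β⁽ᵏ⁾` with `k ≥ 2` and all `β⁽ⁱ⁾ ∈ R_c⁺`. -/
def Sc (r : ℕ) (a : I r → I r → ℕ) (c : Q r →ₗ[ℤ] ℂ) : Set (Q r) :=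
  {α ∈ RcPos r a c |
    ∀ (k : ℕ) (f : Fin k → Q r), 2 ≤ k → (∀ t, f t ∈ RcPos r a c) →
      α = ∑ t, f t → ∑ t, p r a (f t) < p r a α}

/-- `Φ_c⁺ = Φ⁺ ∩ R_c`, where `Φ⁺ = Φ ∩ R⁺` and `Φ = {α ∈ R : α_0 = 0}`. -/
def PhicPos (r : ℕ) (a : I r → I r → ℕ) (c : Q r →ₗ[ℤ] ℂ) : Set (Q r) :=
  ({α ∈ Roots r a | α 0 = 0} ∩ PosRoots r a) ∩ Rc r a c

/-- `α ∈ Φ_c⁺` is minimal if it cannot be written as a sum of two elements of `Φ_c⁺`. -/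
def PhicMin (r : ℕ) (a : I r → I r → ℕ) (c : Q r →ₗ[ℤ] ℂ) : Set (Q r) :=
  {α ∈ PhicPos r a c |
    ¬ ∃ β ∈ PhicPos r a c, ∃ γ ∈ PhicPos r a c, α = β + γ}

/-- `α ∈ Φ_c⁺` is maximal if `α + γ ∉ Φ_c⁺` for every `γ ∈ Φ_c⁺`. -/
def PhicMax (r : ℕ) (a : I r → I r → ℕ) (c : Q r →ₗ[ℤ] ℂ) : Set (Q r) :=
  {α ∈ PhicPos r a c | ∀ γ ∈ PhicPos r a c, α + γ ∉ PhicPos r a c}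

end AffineRoots

/-!
Under the affine hypotheses the positive roots are the vectors `α ≥ 0` with `(α, α) = 2`
(the real ones, where `p = 0`) and the multiples `n • δ`, `n ≥ 1` (where `p = 1`): the form is
even and positive semidefinite with radical `ℤδ`, so every vector of norm two is `≥ 0` or `≤ 0`,
and a nonnegative one descends to a simple root by reflections. Hence `Σ_c` contains `δ`, no
`n • δ` with `n ≥ 2` (a sum of `n` copies of `δ`), and exactly those real `α ∈ R_c⁺` that are
not a sum of two elements of `R_c⁺`: a longer decomposition of a real root can be shortened by
splitting off a summand `β` with `(α, β) ≥ 1`. A real root satisfies `α ≤ δ` or `δ ≤ α`, and in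
the second case `α = δ + (α - δ)`. For `α_0 = 0` indecomposability is minimality in `Φ_c⁺`; for
`α_0 = 1` it is maximality of `δ - α` in `Φ_c⁺`.
-/

namespace AffineRoots

variable {r : ℕ} {a : I r → I r → ℕ} {c : Q r →ₗ[ℤ] ℂ}

lemma B_eq_toBilin' (α β : Q r) :
    B r a α β = Matrix.toBilin' (Matrix.of (cartan r a)) α β := by
  rw [Matrix.toBilin'_apply]; rfl

lemma B_add_left (α β γ : Q r) : B r a (α + β) γ = B r a α γ + B r a β γ := by
  simp only [B_eq_toBilin', map_add, LinearMap.add_apply]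

lemma B_add_right (α β γ : Q r) : B r a α (β + γ) = B r a α β + B r a α γ := by
  simp only [B_eq_toBilin', map_add]

lemma B_sub_left (α β γ : Q r) : B r a (α - β) γ = B r a α γ - B r a β γ := by
  simp only [B_eq_toBilin', map_sub, LinearMap.sub_apply]

lemma B_sub_right (α β γ : Q r) : B r a α (β - γ) = B r a α β - B r a α γ := by
  simp only [B_eq_toBilin', map_sub]

lemma B_smul_left (n : ℤ) (α β : Q r) : B r a (n • α) β = n * B r a α β := by
  simp only [B_eq_toBilin', map_zsmul, LinearMap.smul_apply, smul_eq_mul]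

lemma B_smul_right (n : ℤ) (α β : Q r) : B r a α (n • β) = n * B r a α β := by
  simp only [B_eq_toBilin', map_zsmul, smul_eq_mul]

lemma B_zero_left (β : Q r) : B r a 0 β = 0 := by
  simp only [B_eq_toBilin', map_zero, LinearMap.zero_apply]

lemma B_sum_right {ι : Type*} (s : Finset ι) (α : Q r) (f : ι → Q r) :
    B r a α (∑ t ∈ s, f t) = ∑ t ∈ s, B r a α (f t) := by
  simp only [B_eq_toBilin', map_sum]

lemma B_e_e (i j : I r) : B r a (e r i) (e r j) = cartan r a i j := by
  rw [B_eq_toBilin', e, e, Matrix.toBilin'_single, Matrix.of_apply]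

lemma B_eq_sum_B_e_mul (α β : Q r) : B r a α β = ∑ j, B r a α (e r j) * β j := by
  conv_lhs => rw [← Finset.univ_sum_single β]
  rw [B_sum_right]
  refine Finset.sum_congr rfl fun j _ => ?_
  rw [mul_comm, ← B_smul_right, e, ← Pi.single_smul, smul_eq_mul, mul_one]

lemma ne_zero_of_B_self_eq_two {v : Q r} (hv : B r a v v = 2) : v ≠ 0 := by
  rintro rfl
  rw [B_zero_left] at hv
  exact two_ne_zero hv.symm

lemma B_nonpos_of_disjoint {x y : Q r} (hx : 0 ≤ x) (hy : 0 ≤ y) (hxy : ∀ i, x i * y i = 0) :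
    B r a x y ≤ 0 := by
  refine Finset.sum_nonpos fun i _ => Finset.sum_nonpos fun j _ => ?_
  by_cases hij : i = j
  · subst hij
    rw [mul_right_comm, hxy i, zero_mul]
  · have hc : cartan r a i j ≤ 0 := by simp [cartan, hij]
    exact mul_nonpos_of_nonpos_of_nonneg (mul_nonpos_of_nonneg_of_nonpos (hx i) hc) (hy j)

section Symmetric

variable (hs : ∀ i j, a i j = a j i)
include hs

lemma cartan_comm (i j : I r) : cartan r a i j = cartan r a j i := by
  simp only [cartan, hs i j, eq_comm]

lemma B_comm (α β : Q r) : B r a α β = B r a β α := by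
  rw [B, B, Finset.sum_comm]
  refine Finset.sum_congr rfl fun i _ => Finset.sum_congr rfl fun j _ => ?_
  rw [cartan_comm hs]
  ring

lemma B_add_add_self (α β : Q r) :
    B r a (α + β) (α + β) = B r a α α + 2 * B r a α β + B r a β β := by
  rw [B_add_left, B_add_right, B_add_right, B_comm hs β α]
  ring

lemma B_sub_sub_self (α β : Q r) :
    B r a (α - β) (α - β) = B r a α α - 2 * B r a α β + B r a β β := by
  rw [B_sub_left, B_sub_right, B_sub_right, B_comm hs β α]
  ring

end Symmetric

lemma even_sum_sum_of_symm {ι : Type*} [DecidableEq ι] (s : Finset ι) (x : ι → ι → ℤ)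
    (hsymm : ∀ i j, x i j = x j i) (hdiag : ∀ i, Even (x i i)) :
    Even (∑ i ∈ s, ∑ j ∈ s, x i j) := by
  induction s using Finset.induction_on with
  | empty => simp
  | insert k s hk ih =>
    have hcol : ∑ i ∈ s, x i k = ∑ j ∈ s, x k j :=
      Finset.sum_congr rfl fun i _ => hsymm i k
    have hsplit : ∑ i ∈ insert k s, ∑ j ∈ insert k s, x i j
        = ∑ i ∈ s, ∑ j ∈ s, x i j + 2 * ∑ j ∈ s, x k j + x k k := by
      simp only [Finset.sum_insert hk, Finset.sum_add_distrib, hcol]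
      ring
    rw [hsplit]
    exact (ih.add (even_two_mul _)).add (hdiag k)

lemma even_B_self (hs : ∀ i j, a i j = a j i) (hl : ∀ i, a i i = 0) (v : Q r) :
    Even (B r a v v) :=
  even_sum_sum_of_symm _ _ (fun i j => by rw [cartan_comm hs]; ring)
    fun i => ⟨v i * v i, by simp [cartan, hl]; ring⟩

section Reflections

variable (hl : ∀ i, a i i = 0)
include hl

lemma B_e_self (i : I r) : B r a (e r i) (e r i) = 2 := by
  simp [B_e_e, cartan, hl]

lemma refl_involutive (i : I r) : Function.Involutive (refl r a i) := fun x => by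
  have hB : B r a (refl r a i x) (e r i) = -B r a x (e r i) := by
    rw [refl, B_sub_left, B_smul_left, B_e_self hl]
    ring
  rw [refl, hB, refl, neg_smul, sub_neg_eq_add, sub_add_cancel]

def reflPerm (i : I r) : Equiv.Perm (Q r) := (refl_involutive hl i).toPerm _

lemma reflPerm_apply (i : I r) (x : Q r) : reflPerm hl i x = refl r a i x := rfl

lemma reflPerm_mem_W (i : I r) : reflPerm hl i ∈ W r a :=
  Subgroup.subset_closure ⟨i, fun _ => rfl⟩

lemma B_refl_self (hs : ∀ i j, a i j = a j i) (i : I r) (x : Q r) :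
    B r a (refl r a i x) (refl r a i x) = B r a x x := by
  rw [refl, B_sub_sub_self hs, B_smul_right, B_smul_left, B_smul_right, B_e_self hl]
  ring

lemma B_self_apply_of_mem_W (hs : ∀ i j, a i j = a j i) {σ : Equiv.Perm (Q r)}
    (hσ : σ ∈ W r a) (x : Q r) : B r a (σ x) (σ x) = B r a x x := by
  induction hσ using Subgroup.closure_induction generalizing x with
  | mem σ hσ =>
    obtain ⟨i, hi⟩ := hσ
    rw [hi, B_refl_self hl hs]
  | one => rfl
  | mul σ τ _ _ hσ hτ => rw [Equiv.Perm.mul_apply, hσ, hτ]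
  | inv σ _ hσ => rw [← hσ, Equiv.Perm.inv_def, Equiv.apply_symm_apply]

lemma B_self_of_mem_RealRoots (hs : ∀ i j, a i j = a j i) {α : Q r}
    (hα : α ∈ RealRoots r a) : B r a α α = 2 := by
  obtain ⟨σ, hσ, i, rfl⟩ := hα
  rw [B_self_apply_of_mem_W hl hs hσ, B_e_self hl]

lemma eq_e_of_B_self_eq_two {v : Q r} {i : I r} (hv0 : 0 ≤ v) (hsupp : ∀ j ≠ i, v j = 0)
    (hv : B r a v v = 2) : v = e r i := by
  have hvi : v = v i • e r i := by
    ext j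
    by_cases hj : j = i
    · subst hj; simp [e]
    · simp [e, hj, hsupp j hj]
  rw [hvi, B_smul_left, B_smul_right, B_e_self hl] at hv
  have h1 : v i = 1 := by
    have := Int.eq_one_or_neg_one_of_mul_eq_one (u := v i) (v := v i) (by linarith)
    have : 0 ≤ v i := hv0 i
    omega
  rw [hvi, h1, one_smul]

end Reflections

lemma exists_B_e_pos {v : Q r} (hv0 : 0 ≤ v) (hv : 0 < B r a v v) :
    ∃ i, 0 < B r a v (e r i) := by
  by_contra! hle
  rw [B_eq_sum_B_e_mul] at hv
  exact hv.not_ge (Finset.sum_nonpos fun j _ => mul_nonpos_of_nonpos_of_nonneg (hle j) (hv0 j))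

lemma mem_RcPos_iff {α : Q r} : α ∈ RcPos r a c ↔ α ∈ PosRoots r a ∧ c α = 0 :=
  ⟨fun hα => ⟨hα.2, hα.1.2⟩, fun hα => ⟨⟨hα.1.1, hα.2⟩, hα.1⟩⟩

lemma mem_PhicPos_iff {α : Q r} : α ∈ PhicPos r a c ↔ α ∈ RcPos r a c ∧ α 0 = 0 :=
  ⟨fun hα => ⟨⟨hα.2, hα.1.2⟩, hα.1.1.2⟩, fun hα => ⟨⟨⟨hα.1.2.1, hα.2⟩, hα.1.2⟩, hα.1.1⟩⟩

lemma nonneg_of_mem_RcPos {α : Q r} (hα : α ∈ RcPos r a c) : 0 ≤ α := hα.2.2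

lemma p_eq_zero {α : Q r} (hα : B r a α α = 2) : p r a α = 0 := by
  rw [p, hα]; norm_num

lemma p_eq_one {α : Q r} (hα : B r a α α = 0) : p r a α = 1 := by
  rw [p, hα]; norm_num

namespace AffineData

variable {δ : Q r} (h : AffineData r a δ)
include h

lemma B_delta_left (β : Q r) : B r a δ β = 0 :=
  (h.radical δ).2 ⟨1, (one_smul ℤ δ).symm⟩ β

lemma B_delta_right (β : Q r) : B r a β δ = 0 := by
  rw [B_comm h.symm, h.B_delta_left]

lemma B_delta_sub_self (x : Q r) : B r a (δ - x) (δ - x) = B r a x x := by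
  rw [B_sub_sub_self h.symm, h.B_delta_left, h.B_delta_left]
  ring

lemma B_sub_delta_self (x : Q r) : B r a (x - δ) (x - δ) = B r a x x := by
  rw [B_sub_sub_self h.symm, h.B_delta_right, h.B_delta_left]
  ring

lemma B_smul_delta_self (n : ℤ) : B r a (n • δ) (n • δ) = 0 := by
  rw [B_smul_left, h.B_delta_left, mul_zero]

lemma smul_delta_apply_zero (n : ℤ) : (n • δ) 0 = n := by
  simp [h.delta_zero]

lemma delta_le_smul_delta {n : ℤ} (hn : 0 < n) : δ ≤ n • δ := fun i => by
  simpa using le_mul_of_one_le_left (h.delta_pos i).le (by omega : (1 : ℤ) ≤ n)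

lemma eq_smul_delta_of_B_self_eq_zero {v : Q r} (hv : B r a v v = 0) : ∃ n : ℤ, v = n • δ := by
  refine (h.radical v).1 fun β => ?_
  have hline : ∀ n : ℤ, 0 ≤ B r a β β + 2 * n * B r a v β := fun n => by
    have := h.posSemidef (β + n • v)
    rwa [B_add_add_self h.symm, B_smul_right, B_smul_left, B_smul_right, hv, B_comm h.symm β v,
      mul_zero, mul_zero, add_zero, ← mul_assoc] at this
  by_contra hx
  have := hline (-(B r a β β + 1) * B r a v β)
  nlinarith [h.posSemidef β, mul_self_pos.2 hx]

lemma two_le_B_self {v : Q r} (hv : v ≠ 0) {k : I r} (hk : v k = 0) : 2 ≤ B r a v v := by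
  have hne : B r a v v ≠ 0 := fun h0 => by
    obtain ⟨n, rfl⟩ := h.eq_smul_delta_of_B_self_eq_zero h0
    have hn : n = 0 := by simpa [(h.delta_pos k).ne'] using hk
    exact hv (by rw [hn, zero_smul])
  obtain ⟨m, hm⟩ := even_B_self h.symm h.noloops v
  have := h.posSemidef v
  omega

/-- Otherwise `v⁺` and `v⁻` both vanish somewhere, so neither is a multiple of `δ` and both
have norm at least two; since `(v⁺, v⁻) ≤ 0`, this forces `(v, v) ≥ 4`. -/
lemma nonneg_or_nonpos_of_B_self_eq_two {v : Q r} (hv : B r a v v = 2) : 0 ≤ v ∨ v ≤ 0 := by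
  by_contra! hne
  obtain ⟨k, hk⟩ : ∃ k, v k < 0 := by simpa [Pi.le_def] using hne.1
  obtain ⟨l, hl⟩ : ∃ l, 0 < v l := by simpa [Pi.le_def] using hne.2
  have hpos := h.two_le_B_self (v := v⁺) (k := k) (fun h0 => hne.2 (posPart_eq_zero.1 h0))
    (by simp [hk.le])
  have hneg := h.two_le_B_self (v := v⁻) (k := l) (fun h0 => hne.1 (negPart_eq_zero.1 h0))
    (by simp [hl.le])
  have hcross : B r a v⁺ v⁻ ≤ 0 := B_nonpos_of_disjoint (posPart_nonneg v) (negPart_nonneg v)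
    fun i => by
      rcases le_total (v i) 0 with hi | hi <;> simp [hi]
  have hsplit := B_sub_sub_self h.symm (a := a) v⁺ v⁻
  rw [posPart_sub_negPart] at hsplit
  omega

lemma le_delta_or_delta_le {v : Q r} (hv : B r a v v = 2) : v ≤ δ ∨ δ ≤ v := by
  rw [← h.B_delta_sub_self] at hv
  rcases h.nonneg_or_nonpos_of_B_self_eq_two hv with hle | hle
  · exact Or.inl (sub_nonneg.1 hle)
  · exact Or.inr (sub_nonpos.1 hle)

/-- Descent along the height `∑ i, v i`: for `i` with `(v, e_i) > 0`, the reflection `s_i v`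
is again of norm two and lower height, and it cannot be `≤ 0` unless `v = e_i`. -/
lemma mem_RealRoots_of_nonneg {v : Q r} (hv0 : 0 ≤ v) (hv : B r a v v = 2) :
    v ∈ RealRoots r a := by
  induction hN : (∑ i, v i).toNat using Nat.strong_induction_on generalizing v with
  | _ N ih =>
  obtain ⟨i, hi⟩ := exists_B_e_pos hv0 (by rw [hv]; norm_num)
  have hw : B r a (refl r a i v) (refl r a i v) = 2 := (B_refl_self h.noloops h.symm i v).trans hv
  have hwv : ∀ j ≠ i, refl r a i v j = v j := fun j hj => by simp [refl, e, hj]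
  rcases h.nonneg_or_nonpos_of_B_self_eq_two hw with hw0 | hw0
  · have hsum : ∑ j, refl r a i v j = ∑ j, v j - B r a v (e r i) := by
      simp [refl, e, Finset.sum_sub_distrib, Pi.single_apply]
    have hlt : (∑ j, refl r a i v j).toNat < N := by
      have : 0 ≤ ∑ j, refl r a i v j := Finset.sum_nonneg fun j _ => hw0 j
      omega
    obtain ⟨σ, hσ, j, hj⟩ := ih _ hlt hw0 hw rfl
    refine ⟨reflPerm h.noloops i * σ, mul_mem (reflPerm_mem_W h.noloops i) hσ, j, ?_⟩
    rw [Equiv.Perm.mul_apply, ← hj, reflPerm_apply, refl_involutive h.noloops i v]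
  · refine ⟨1, one_mem _, i, ?_⟩
    refine eq_e_of_B_self_eq_two h.noloops hv0 (fun j hj => le_antisymm ?_ (hv0 j)) hv
    rw [← hwv j hj]
    exact hw0 j

lemma smul_delta_mem_Fund {n : ℤ} (hn : 0 < n) : n • δ ∈ Fund r a := by
  have hpos : ∀ i, 0 < (n • δ) i := fun i => by simpa using mul_pos hn (h.delta_pos i)
  refine ⟨fun h0 => (hpos 0).ne' (congrFun h0 0), fun i => (hpos i).le, ?_, fun i => ?_⟩
  · exact fun i j _ _ =>
      Relation.ReflTransGen.mono (fun x y (hxy : 0 < a x y) => ⟨(hpos x).ne', (hpos y).ne', hxy⟩)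
        i j (h.connected i j)
  · rw [B_smul_left, h.B_delta_left, mul_zero]

lemma eq_smul_delta_of_mem_Fund {α : Q r} (hα : α ∈ Fund r a) :
    ∃ n : ℤ, 0 < n ∧ α = n • δ := by
  obtain ⟨hne, hα0, -, hB⟩ := hα
  have hnorm : B r a α α = 0 := by
    refine le_antisymm ?_ (h.posSemidef α)
    rw [B_eq_sum_B_e_mul]
    exact Finset.sum_nonpos fun i _ => mul_nonpos_of_nonpos_of_nonneg (hB i) (hα0 i)
  obtain ⟨n, rfl⟩ := h.eq_smul_delta_of_B_self_eq_zero hnorm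
  refine ⟨n, lt_of_le_of_ne ?_ ?_, rfl⟩
  · simpa [h.smul_delta_apply_zero] using hα0 0
  · rintro rfl
    exact hne (zero_smul ℤ δ)

lemma apply_smul_delta_of_mem_W {σ : Equiv.Perm (Q r)} (hσ : σ ∈ W r a) (n : ℤ) :
    σ (n • δ) = n • δ := by
  suffices W r a ≤ MulAction.stabilizer (Equiv.Perm (Q r)) (n • δ) from this hσ
  refine (Subgroup.closure_le _).2 ?_
  rintro _ ⟨i, hi⟩
  rw [SetLike.mem_coe, MulAction.mem_stabilizer_iff, Equiv.Perm.smul_def, hi, refl,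
    B_smul_left, h.B_delta_left, mul_zero, zero_smul, sub_zero]

lemma eq_smul_delta_of_mem_ImRoots {α : Q r} (hα : α ∈ ImRoots r a) :
    ∃ n : ℤ, n ≠ 0 ∧ α = n • δ := by
  obtain ⟨σ, hσ, β, hβ, hα⟩ := hα
  obtain ⟨n, hn, rfl⟩ := h.eq_smul_delta_of_mem_Fund hβ
  rw [h.apply_smul_delta_of_mem_W hσ] at hα
  rcases hα with rfl | rfl
  · exact ⟨n, hn.ne', rfl⟩
  · exact ⟨-n, neg_ne_zero.2 hn.ne', (neg_smul n δ).symm⟩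

lemma mem_PosRoots_iff {α : Q r} :
    α ∈ PosRoots r a ↔ 0 ≤ α ∧ (B r a α α = 2 ∨ ∃ n : ℤ, 0 < n ∧ α = n • δ) := by
  constructor
  · rintro ⟨hreal | him, hα0⟩
    · exact ⟨hα0, Or.inl (B_self_of_mem_RealRoots h.noloops h.symm hreal)⟩
    · obtain ⟨n, hn, rfl⟩ := h.eq_smul_delta_of_mem_ImRoots him
      have : 0 ≤ n := by simpa [h.smul_delta_apply_zero] using hα0 0
      exact ⟨hα0, Or.inr ⟨n, lt_of_le_of_ne this hn.symm, rfl⟩⟩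
  · rintro ⟨hα0, h2 | ⟨n, hn, rfl⟩⟩
    · exact ⟨Or.inl (h.mem_RealRoots_of_nonneg hα0 h2), hα0⟩
    · exact ⟨Or.inr ⟨1, one_mem _, n • δ, h.smul_delta_mem_Fund hn, Or.inl rfl⟩, hα0⟩

lemma ne_zero_of_mem_PosRoots {α : Q r} (hα : α ∈ PosRoots r a) : α ≠ 0 := by
  rcases (h.mem_PosRoots_iff.1 hα).2 with h2 | ⟨n, hn, rfl⟩
  · exact ne_zero_of_B_self_eq_two h2
  · intro h0
    exact hn.ne' ((h.smul_delta_apply_zero n).symm.trans (congrFun h0 0))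

lemma B_self_le_two_of_mem_PosRoots {α : Q r} (hα : α ∈ PosRoots r a) : B r a α α ≤ 2 := by
  rcases (h.mem_PosRoots_iff.1 hα).2 with h2 | ⟨n, -, rfl⟩
  · exact h2.le
  · rw [h.B_smul_delta_self]; norm_num

lemma mem_PosRoots_of_B_self_le_two {α : Q r} (hα0 : 0 ≤ α) (hne : α ≠ 0)
    (hle : B r a α α ≤ 2) : α ∈ PosRoots r a := by
  refine h.mem_PosRoots_iff.2 ⟨hα0, ?_⟩
  obtain ⟨m, hm⟩ := even_B_self h.symm h.noloops α
  have := h.posSemidef α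
  obtain h0 | h2 : B r a α α = 0 ∨ B r a α α = 2 := by omega
  · obtain ⟨n, rfl⟩ := h.eq_smul_delta_of_B_self_eq_zero h0
    have : 0 ≤ n := by simpa [h.smul_delta_apply_zero] using hα0 0
    refine Or.inr ⟨n, lt_of_le_of_ne this ?_, rfl⟩
    rintro rfl
    exact hne (zero_smul ℤ δ)
  · exact Or.inl h2

lemma p_nonneg_of_mem_PosRoots {α : Q r} (hα : α ∈ PosRoots r a) : 0 ≤ p r a α := by
  rcases (h.mem_PosRoots_iff.1 hα).2 with h2 | ⟨n, -, rfl⟩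
  · rw [p_eq_zero h2]
  · rw [p_eq_one (h.B_smul_delta_self n)]; norm_num

lemma mem_RcPos_of_B_self_le_two {α : Q r} (hα0 : 0 ≤ α) (hne : α ≠ 0)
    (hle : B r a α α ≤ 2) (hcα : c α = 0) : α ∈ RcPos r a c :=
  mem_RcPos_iff.2 ⟨h.mem_PosRoots_of_B_self_le_two hα0 hne hle, hcα⟩

lemma B_self_eq_two_of_mem_PhicPos {α : Q r} (hα : α ∈ PhicPos r a c) : B r a α α = 2 := by
  obtain ⟨hRc, h0⟩ := mem_PhicPos_iff.1 hα
  rcases (h.mem_PosRoots_iff.1 hRc.2).2 with h2 | ⟨n, hn, rfl⟩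
  · exact h2
  · rw [h.smul_delta_apply_zero] at h0
    exact absurd h0 hn.ne'

/-- In a decomposition `α = ∑ f t` of a real root, some summand `f t` has `(α, f t) ≥ 1`,
and then `α - f t` is a positive root of norm `4 - 2 (α, f t) ≤ 2`. -/
lemma exists_add_of_eq_sum {ι : Type*} [Fintype ι] [Nontrivial ι] {α : Q r}
    (hα : B r a α α = 2) (f : ι → Q r) (hf : ∀ t, f t ∈ RcPos r a c) (hsum : α = ∑ t, f t) :
    ∃ β ∈ RcPos r a c, ∃ γ ∈ RcPos r a c, α = β + γ := by
  classical
  obtain ⟨t, -, ht⟩ : ∃ t ∈ Finset.univ, (0 : ℤ) < B r a α (f t) := by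
    refine Finset.exists_lt_of_sum_lt ?_
    rw [← B_sum_right, ← hsum, hα, Finset.sum_const_zero]
    norm_num
  obtain ⟨s, hst⟩ := exists_ne t
  have hft : B r a (f t) (f t) = 2 := by
    rcases (h.mem_PosRoots_iff.1 (hf t).2).2 with h2 | ⟨n, -, hn⟩
    · exact h2
    · rw [hn, B_smul_right, h.B_delta_right, mul_zero] at ht
      exact absurd ht (lt_irrefl 0)
  have hle : f t + f s ≤ α := hsum ▸ Finset.add_le_sum (fun u _ => nonneg_of_mem_RcPos (hf u))
    (Finset.mem_univ t) (Finset.mem_univ s) hst.symm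
  have hfs : f s ≤ α - f t := le_sub_iff_add_le'.2 hle
  have hcα : c α = 0 := by
    rw [hsum, map_sum]
    exact Finset.sum_eq_zero fun u _ => (hf u).1.2
  refine ⟨f t, hf t, α - f t, h.mem_RcPos_of_B_self_le_two ?_ ?_ ?_ ?_, (add_sub_cancel _ _).symm⟩
  · exact (nonneg_of_mem_RcPos (hf s)).trans hfs
  · intro h0
    exact h.ne_zero_of_mem_PosRoots (hf s).2
      (le_antisymm (h0 ▸ hfs) (nonneg_of_mem_RcPos (hf s)))
  · rw [B_sub_sub_self h.symm, hα, hft]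
    omega
  · rw [map_sub, hcα, (hf t).1.2, sub_zero]

lemma mem_Sc_iff_mem_Dc {α : Q r} (hα : B r a α α = 2) : α ∈ Sc r a c ↔ α ∈ Dc r a c := by
  constructor
  · rintro ⟨hRc, hSc⟩
    refine ⟨hRc, fun ⟨β, hβ, γ, hγ, hsum⟩ => ?_⟩
    have := hSc 2 ![β, γ] le_rfl (Fin.forall_fin_two.2 ⟨hβ, hγ⟩) (by simp [hsum])
    rw [Fin.sum_univ_two, p_eq_zero hα] at this
    simp only [Matrix.cons_val_zero, Matrix.cons_val_one] at this
    linarith [h.p_nonneg_of_mem_PosRoots hβ.2, h.p_nonneg_of_mem_PosRoots hγ.2]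
  · rintro ⟨hRc, hDc⟩
    refine ⟨hRc, fun k f hk hf hsum => absurd ?_ hDc⟩
    have : Nontrivial (Fin k) := Fin.nontrivial_iff_two_le.2 hk
    exact h.exists_add_of_eq_sum hα f hf hsum

lemma PhicMin_eq : PhicMin r a c = {α ∈ Dc r a c | B r a α α = 2 ∧ α 0 = 0} := by
  ext α
  constructor
  · rintro ⟨hP, hmin⟩
    obtain ⟨hRc, h0⟩ := mem_PhicPos_iff.1 hP
    refine ⟨⟨hRc, fun ⟨β, hβ, γ, hγ, hsum⟩ => hmin ?_⟩, h.B_self_eq_two_of_mem_PhicPos hP, h0⟩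
    have hβ0 : 0 ≤ β 0 := nonneg_of_mem_RcPos hβ 0
    have hγ0 : 0 ≤ γ 0 := nonneg_of_mem_RcPos hγ 0
    have hsum0 : α 0 = β 0 + γ 0 := congrFun hsum 0
    exact ⟨β, mem_PhicPos_iff.2 ⟨hβ, by omega⟩, γ, mem_PhicPos_iff.2 ⟨hγ, by omega⟩, hsum⟩
  · rintro ⟨⟨hRc, hDc⟩, -, h0⟩
    exact ⟨mem_PhicPos_iff.2 ⟨hRc, h0⟩, fun ⟨β, hβ, γ, hγ, hsum⟩ =>
      hDc ⟨β, (mem_PhicPos_iff.1 hβ).1, γ, (mem_PhicPos_iff.1 hγ).1, hsum⟩⟩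

variable (hc : c δ = 0)
include hc

lemma delta_mem_RcPos : δ ∈ RcPos r a c :=
  h.mem_RcPos_of_B_self_le_two (fun i => (h.delta_pos i).le)
    (fun h0 => (h.delta_pos 0).ne' (congrFun h0 0)) (by rw [h.B_delta_left]; norm_num) hc

lemma delta_mem_Sc : δ ∈ Sc r a c := by
  refine ⟨h.delta_mem_RcPos hc, fun k f hk hf hsum => ?_⟩
  have : Nontrivial (Fin k) := Fin.nontrivial_iff_two_le.2 hk
  have hreal : ∀ t, B r a (f t) (f t) = 2 := fun t => by
    rcases (h.mem_PosRoots_iff.1 (hf t).2).2 with h2 | ⟨n, hn, hft⟩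
    · exact h2
    obtain ⟨s, hst⟩ := exists_ne t
    have hle : f t + f s ≤ δ := hsum ▸ Finset.add_le_sum
      (fun u _ => nonneg_of_mem_RcPos (hf u)) (Finset.mem_univ t) (Finset.mem_univ s) hst.symm
    have hfs : f s ≤ 0 := by
      have := (add_le_add_left (hft ▸ h.delta_le_smul_delta hn) (f s)).trans hle
      simpa using this
    exact absurd (le_antisymm hfs (nonneg_of_mem_RcPos (hf s)))
      (h.ne_zero_of_mem_PosRoots (hf s).2)
  rw [Finset.sum_eq_zero fun t _ => p_eq_zero (hreal t), p_eq_one (h.B_delta_left δ)]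
  norm_num

lemma smul_delta_notMem_Sc {n : ℤ} (hn : 2 ≤ n) : n • δ ∉ Sc r a c := by
  lift n to ℕ using by omega
  intro hmem
  have := hmem.2 n (fun _ => δ) (by omega) (fun _ => h.delta_mem_RcPos hc) (by simp)
  rw [p_eq_one (h.B_smul_delta_self n), Finset.sum_const, Finset.card_univ, Fintype.card_fin,
    p_eq_one (h.B_delta_left δ), nsmul_one] at this
  norm_cast at this
  omega

lemma Sc_eq : Sc r a c = {δ} ∪ {α ∈ Dc r a c | B r a α α = 2} := by
  ext α
  constructor
  · intro hα
    rcases (h.mem_PosRoots_iff.1 hα.1.2).2 with h2 | ⟨n, hn, rfl⟩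
    · exact Or.inr ⟨(h.mem_Sc_iff_mem_Dc h2).1 hα, h2⟩
    · obtain rfl | hn2 : n = 1 ∨ 2 ≤ n := by omega
      · exact Or.inl (one_smul ℤ δ)
      · exact absurd hα (h.smul_delta_notMem_Sc hc hn2)
  · rintro (rfl | ⟨hα, h2⟩)
    · exact h.delta_mem_Sc hc
    · exact (h.mem_Sc_iff_mem_Dc h2).2 hα

lemma delta_sub_mem_RcPos {ψ : Q r} (hψ : ψ ∈ PhicPos r a c) : δ - ψ ∈ RcPos r a c := by
  obtain ⟨hRc, h0⟩ := mem_PhicPos_iff.1 hψ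
  have hψ2 := h.B_self_eq_two_of_mem_PhicPos hψ
  have hle : ψ ≤ δ := (h.le_delta_or_delta_le hψ2).resolve_right fun hδψ => by
    have : δ 0 ≤ ψ 0 := hδψ 0
    rw [h.delta_zero, h0] at this
    omega
  refine h.mem_RcPos_of_B_self_le_two (sub_nonneg.2 hle) (fun h0' => ?_)
    (by rw [h.B_delta_sub_self, hψ2]) (by rw [map_sub, hc, hRc.1.2, sub_zero])
  have := congrFun h0' 0
  simp [h.delta_zero, h0] at this

/-- If `δ - ψ = β + γ` with `γ_0 = 0`, then `ψ + γ = δ - β` lies in `Φ_c⁺`. -/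
lemma delta_sub_mem_Dc_iff {ψ : Q r} (hψ : ψ ∈ PhicPos r a c) :
    δ - ψ ∈ Dc r a c ↔ ψ ∈ PhicMax r a c := by
  constructor
  · refine fun hDc => ⟨hψ, fun γ hγ hψγ => hDc.2 ?_⟩
    exact ⟨δ - (ψ + γ), h.delta_sub_mem_RcPos hc hψγ, γ, (mem_PhicPos_iff.1 hγ).1, by abel⟩
  · refine fun hmax => ⟨h.delta_sub_mem_RcPos hc hψ, fun ⟨β, hβ, γ, hγ, hsum⟩ => ?_⟩
    obtain ⟨hψRc, hψ0⟩ := mem_PhicPos_iff.1 hψ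
    have key : ∀ β γ, β ∈ RcPos r a c → γ ∈ RcPos r a c → δ - ψ = β + γ → γ 0 = 0 → False := by
      intro β γ hβ hγ hsum hγ0
      have hγP : γ ∈ PhicPos r a c := mem_PhicPos_iff.2 ⟨hγ, hγ0⟩
      have hφ : ψ + γ = δ - β := by rw [eq_sub_iff_add_eq, ← sub_eq_iff_eq_add'.2 hsum]; abel
      refine hmax.2 γ hγP (mem_PhicPos_iff.2 ⟨?_, by simp [hψ0, hγ0]⟩)
      refine h.mem_RcPos_of_B_self_le_two
        (add_nonneg (nonneg_of_mem_RcPos hψRc) (nonneg_of_mem_RcPos hγ)) ?_ ?_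
        (by rw [hφ, map_sub, hc, hβ.1.2, sub_zero])
      · rw [Ne, add_eq_zero_iff_of_nonneg (nonneg_of_mem_RcPos hψRc) (nonneg_of_mem_RcPos hγ)]
        exact fun h0 => h.ne_zero_of_mem_PosRoots hγ.2 h0.2
      · rw [hφ, h.B_delta_sub_self]
        exact h.B_self_le_two_of_mem_PosRoots hβ.2
    have hsum0 : δ 0 - ψ 0 = β 0 + γ 0 := congrFun hsum 0
    have hβ0 : 0 ≤ β 0 := nonneg_of_mem_RcPos hβ 0
    have hγ0 : 0 ≤ γ 0 := nonneg_of_mem_RcPos hγ 0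
    rw [h.delta_zero, hψ0] at hsum0
    obtain hβ0 | hγ0 : β 0 = 0 ∨ γ 0 = 0 := by omega
    · exact key γ β hγ hβ (hsum.trans (add_comm β γ)) hβ0
    · exact key β γ hβ hγ hsum hγ0

/-- A real root `α ≥ δ` decomposes as `δ + (α - δ)`. -/
lemma delta_sub_mem_PhicPos_of_mem_Dc {α : Q r} (hα : α ∈ Dc r a c) (hα2 : B r a α α = 2)
    (hα0 : α 0 ≠ 0) : δ - α ∈ PhicPos r a c := by
  obtain ⟨hRc, hDc⟩ := hα
  have hle : α ≤ δ := (h.le_delta_or_delta_le hα2).resolve_right fun hδα => hDc ?_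
  · have hδα0 : α 0 ≤ 1 := h.delta_zero ▸ hle 0
    have : 0 ≤ α 0 := nonneg_of_mem_RcPos hRc 0
    refine mem_PhicPos_iff.2 ⟨h.mem_RcPos_of_B_self_le_two (sub_nonneg.2 hle)
      (ne_zero_of_B_self_eq_two (by rw [h.B_delta_sub_self, hα2]))
      (by rw [h.B_delta_sub_self, hα2]) (by rw [map_sub, hc, hRc.1.2, sub_zero]), ?_⟩
    simp only [Pi.sub_apply, h.delta_zero]
    omega
  · refine ⟨δ, h.delta_mem_RcPos hc, α - δ, h.mem_RcPos_of_B_self_le_two (sub_nonneg.2 hδα)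
      ?_ ?_ (by rw [map_sub, hc, hRc.1.2, sub_zero]), (add_sub_cancel δ α).symm⟩
    · exact ne_zero_of_B_self_eq_two (a := a) (by rw [h.B_sub_delta_self, hα2])
    · rw [h.B_sub_delta_self, hα2]

lemma image_PhicMax_eq :
    {β | ∃ α ∈ PhicMax r a c, β = δ - α} = {α ∈ Dc r a c | B r a α α = 2 ∧ α 0 ≠ 0} := by
  ext β
  constructor
  · rintro ⟨ψ, hψ, rfl⟩
    refine ⟨(h.delta_sub_mem_Dc_iff hc hψ.1).2 hψ, ?_, ?_⟩
    · rw [h.B_delta_sub_self, h.B_self_eq_two_of_mem_PhicPos hψ.1]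
    · simp [h.delta_zero, (mem_PhicPos_iff.1 hψ.1).2]
  · rintro ⟨hDc, h2, h0⟩
    have hψ := h.delta_sub_mem_PhicPos_of_mem_Dc hc hDc h2 h0
    refine ⟨δ - β, (h.delta_sub_mem_Dc_iff hc hψ).1 ?_, (sub_sub_cancel δ β).symm⟩
    rwa [sub_sub_cancel]

end AffineData

end AffineRoots

open AffineRoots in
/-- Assume `c(δ) = 0`, and set `Φ_c⁺ = Φ⁺ ∩ R_c`.  Call `α ∈ Φ_c⁺` minimal if it cannot
be written as a sum of two elements of `Φ_c⁺`, and maximal if `α + γ ∉ Φ_c⁺` for every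
`γ ∈ Φ_c⁺`.  Then
`Σ_c = {minimal elements of Φ_c⁺} ∪ {δ} ∪ {δ − α : α a maximal element of Φ_c⁺}`. -/
theorem Sc_zero_level (r : ℕ) (a : I r → I r → ℕ) (δ : Q r)
    (hdata : AffineData r a δ) (c : Q r →ₗ[ℤ] ℂ) (hc : c δ = 0) :
    Sc r a c =
      PhicMin r a c ∪ {δ} ∪ {β | ∃ α ∈ PhicMax r a c, β = δ - α} := by
  rw [hdata.Sc_eq hc, hdata.PhicMin_eq, hdata.image_PhicMax_eq hc]
  ext α
  simp only [Set.mem_union, Set.mem_singleton_iff, Set.mem_ofPred_eq]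
  by_cases α 0 = 0 <;> tauto
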